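/- arXiv:2005.02734 — 3 statements merged into one kernel-verified Lean document; each statement's English description precedes it below -/
import Mathlib

section
/- For all real numbers X ≥ 0 and Y ≥ 0, one has |exp(−X) − exp(−Y)| / √(exp(−X) + exp(−Y)) ≤ |Y − X|. -/
/-! For `X ≤ Y`, the tangent line of `exp` at `-X` gives
`e^{-X} - e^{-Y} ≤ (Y - X) e^{-X}`, and since `e^{-X} ≤ 1` we have
`e^{-X} ≤ √(e^{-X}) ≤ √(e^{-X} + e^{-Y})`. -/

open Real

lemma Real.exp_sub_exp_le_mul_exp (x y : ℝ) : exp y - exp x ≤ (y - x) * exp y := by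
  have tangent : x - y + 1 ≤ exp (x - y) := add_one_le_exp (x - y)
  have hx : exp x = exp (x - y) * exp y := by rw [← exp_add, sub_add_cancel]
  nlinarith [exp_pos y]

lemma Real.le_sqrt_add_of_le_one {a b : ℝ} (ha : 0 ≤ a) (ha₁ : a ≤ 1) (hb : 0 ≤ b) :
    a ≤ √(a + b) :=
  le_sqrt_of_sq_le (by nlinarith)

lemma Real.exp_neg_sub_exp_neg_le (X Y : ℝ) (hX : 0 ≤ X) (hXY : X ≤ Y) :
    |exp (-X) - exp (-Y)| ≤ |Y - X| * √(exp (-X) + exp (-Y)) := by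
  have hdiff : 0 ≤ exp (-X) - exp (-Y) := sub_nonneg.mpr (exp_le_exp.mpr (by linarith))
  rw [abs_of_nonneg hdiff, abs_of_nonneg (sub_nonneg.mpr hXY)]
  calc exp (-X) - exp (-Y) ≤ (-X - -Y) * exp (-X) := exp_sub_exp_le_mul_exp (-Y) (-X)
    _ = (Y - X) * exp (-X) := by ring
    _ ≤ (Y - X) * √(exp (-X) + exp (-Y)) := by
      gcongr
      exact le_sqrt_add_of_le_one (exp_pos _).le (exp_le_one_iff.mpr (by linarith)) (exp_pos _).le

theorem exp_diff_div_sqrt_sum_le (X Y : ℝ) (hX : 0 ≤ X) (hY : 0 ≤ Y) :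
    |Real.exp (-X) - Real.exp (-Y)| / Real.sqrt (Real.exp (-X) + Real.exp (-Y))
      ≤ |Y - X| := by
  refine div_le_of_le_mul₀ (sqrt_nonneg _) (abs_nonneg _) ?_
  rcases le_total X Y with hXY | hYX
  · exact exp_neg_sub_exp_neg_le X Y hX hXY
  · simpa only [abs_sub_comm, add_comm] using exp_neg_sub_exp_neg_le Y X hY hYX
end

section
/- For all real numbers u₁ ≥ 0, u₂ ≥ 0, v₁ ≥ 0, v₂ ≥ 0, one has (u₁ − u₂)·(u₂·exp(−v₂) − u₁·exp(−v₁)) ≤ (1/8)·(u₁ + u₂)²·(v₁ − v₂)². -/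
/-!
Put `a = exp (-v₁)` and `b = exp (-v₂)`. Symmetrizing,
`u₁ a - u₂ b = ½ [(u₁ + u₂)(a - b) + (a + b)(u₁ - u₂)]`, so the left-hand side is
`-½ (a + b)(u₁ - u₂)² - ½ (u₁ + u₂)(a - b)(u₁ - u₂)`, and Young's inequality absorbs the
cross term into the negative one at the cost of `(u₁ + u₂)² (a - b)² / (8 (a + b))`.
Since `exp` is `1`-Lipschitz and bounded by `1` on `(-∞, 0]`,
`(a - b)² ≤ (v₁ - v₂)² (a + b)`.
-/

open Real

lemma exp_sub_exp_le_sub_mul_exp (x y : ℝ) : exp x - exp y ≤ (x - y) * exp x := by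
  have h : exp y = exp x * exp (-(x - y)) := by rw [← exp_add]; ring_nf
  nlinarith [one_sub_le_exp_neg (x - y), exp_pos x]

lemma sq_exp_sub_exp_le_of_nonpos {x y : ℝ} (hx : x ≤ 0) (hy : y ≤ 0) :
    (exp x - exp y) ^ 2 ≤ (x - y) ^ 2 * (exp x + exp y) := by
  wlog hyx : y ≤ x generalizing x y
  · rw [sub_sq_comm (exp x), sub_sq_comm x, add_comm]
    exact this hy hx (le_of_not_ge hyx)
  have hdiff : 0 ≤ exp x - exp y := sub_nonneg.2 (exp_le_exp.2 hyx)
  have hexp_le_one : exp x ≤ 1 := exp_le_one_iff.2 hx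
  calc (exp x - exp y) ^ 2 ≤ ((x - y) * exp x) ^ 2 :=
        pow_le_pow_left₀ hdiff (exp_sub_exp_le_sub_mul_exp x y) 2
    _ = (x - y) ^ 2 * (exp x * exp x) := by ring
    _ ≤ (x - y) ^ 2 * (exp x + exp y) := by
        gcongr
        nlinarith [exp_pos x, exp_pos y]

lemma eight_mul_add_mul_sub_mul_le (u₁ u₂ a b : ℝ) :
    8 * (a + b) * ((u₁ - u₂) * (u₂ * b - u₁ * a)) ≤ (u₁ + u₂) ^ 2 * (a - b) ^ 2 := by
  nlinarith [sq_nonneg (2 * (a + b) * (u₁ - u₂) + (u₁ + u₂) * (a - b))]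

theorem uniqueness_pointwise_core_general (u₁ u₂ v₁ v₂ : ℝ)
    (hv₁ : 0 ≤ v₁) (hv₂ : 0 ≤ v₂) :
    (u₁ - u₂) * (u₂ * Real.exp (-v₂) - u₁ * Real.exp (-v₁))
      ≤ (1 / 8) * (u₁ + u₂) ^ 2 * (v₁ - v₂) ^ 2 := by
  have hexp := sq_exp_sub_exp_le_of_nonpos (neg_nonpos.2 hv₁) (neg_nonpos.2 hv₂)
  rw [neg_sub_neg, sub_sq_comm v₂] at hexp
  have hpos : 0 < 8 * (exp (-v₁) + exp (-v₂)) := by positivity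
  refine le_of_mul_le_mul_left ?_ hpos
  calc 8 * (exp (-v₁) + exp (-v₂)) * ((u₁ - u₂) * (u₂ * exp (-v₂) - u₁ * exp (-v₁)))
      ≤ (u₁ + u₂) ^ 2 * (exp (-v₁) - exp (-v₂)) ^ 2 := eight_mul_add_mul_sub_mul_le ..
    _ ≤ (u₁ + u₂) ^ 2 * ((v₁ - v₂) ^ 2 * (exp (-v₁) + exp (-v₂))) := by gcongr
    _ = 8 * (exp (-v₁) + exp (-v₂)) * ((1 / 8) * (u₁ + u₂) ^ 2 * (v₁ - v₂) ^ 2) := by ring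

theorem uniqueness_pointwise_core (u₁ u₂ v₁ v₂ : ℝ)
    (hu₁ : 0 ≤ u₁) (hu₂ : 0 ≤ u₂) (hv₁ : 0 ≤ v₁) (hv₂ : 0 ≤ v₂) :
    (u₁ - u₂) * (u₂ * Real.exp (-v₂) - u₁ * Real.exp (-v₁))
      ≤ (1 / 8) * (u₁ + u₂) ^ 2 * (v₁ - v₂) ^ 2 :=
  uniqueness_pointwise_core_general u₁ u₂ v₁ v₂ hv₁ hv₂
end

section
/- Let E be a real inner product space, x ∈ E, δ > 0, and let u, g : E → ℝ be differentiable at x with u(x) ≥ 0. Then ⟪∇(y ↦ exp(−g(y))·u(y))(x), ∇(y ↦ exp(−g(y))·(δ + u(y)))(x)⟫ / (exp(−g(x))·(δ + u(x))) = 4·‖∇(y ↦ Real.sqrt (exp(−g(y))·(δ + u(y))))(x)‖² + (δ/(δ + u(x)))·⟪∇g(x), ∇(y ↦ exp(−g(y))·(δ + u(y)))(x)⟫, where ∇f(x) denotes the gradient of f : E → ℝ at x (the vector representing the Fréchet derivative) and ⟪·,·⟫ the inner product of E. -/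
/-!
With `w = exp (-g) * (δ + u)` one has `exp (-g) * u = w - δ * exp (-g)`, so
`∇(exp (-g) * u) = ∇w + δ exp (-g) ∇g`. Pairing with `∇w` and dividing by `w`, the first part gives
`‖∇w‖² / w = 4 ‖∇√w‖²` (as `∇√w = ∇w / (2√w)`), and the second gives the remainder, because
`δ exp (-g) / w = δ / (δ + u)`.
-/

open Real

section Gradient

variable {F : Type*} [NormedAddCommGroup F] [InnerProductSpace ℝ F] [CompleteSpace F]
  {f w : F → ℝ} {f' W x : F}

theorem HasDerivAt.comp_hasGradientAt {h : ℝ → ℝ} {c : ℝ} (hh : HasDerivAt h c (f x))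
    (hf : HasGradientAt f f' x) : HasGradientAt (fun y => h (f y)) (c • f') x := by
  rw [hasGradientAt_iff_hasFDerivAt, map_smul]
  exact hh.comp_hasFDerivAt x hf.hasFDerivAt

theorem HasGradientAt.sub (hf : HasGradientAt f f' x) (hw : HasGradientAt w W x) :
    HasGradientAt (fun y => f y - w y) (f' - W) x := by
  rw [hasGradientAt_iff_hasFDerivAt, map_sub]
  exact hf.hasFDerivAt.sub hw.hasFDerivAt

theorem HasGradientAt.sqrt (hw : HasGradientAt w W x) (hwx : w x ≠ 0) :
    HasGradientAt (fun y => √(w y)) ((2 * √(w x))⁻¹ • W) x := by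
  simpa [one_div] using (hasDerivAt_sqrt hwx).comp_hasGradientAt hw

theorem four_mul_norm_gradient_sqrt_sq (hw : HasGradientAt w W x) (hwx : 0 < w x) :
    4 * ‖gradient (fun y => √(w y)) x‖ ^ 2 = ‖W‖ ^ 2 / w x := by
  rw [(hw.sqrt hwx.ne').gradient, norm_smul, mul_pow, norm_inv, norm_mul, Real.norm_two,
    Real.norm_of_nonneg (sqrt_nonneg _), inv_pow, mul_pow, sq_sqrt hwx.le]
  field_simp
  ring

theorem inner_div_eq_four_mul_norm_gradient_sqrt_sq_add (V : F) (hw : HasGradientAt w W x)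
    (hwx : 0 < w x) :
    inner ℝ V W / w x = 4 * ‖gradient (fun y => √(w y)) x‖ ^ 2 + inner ℝ (V - W) W / w x := by
  rw [four_mul_norm_gradient_sqrt_sq hw hwx, ← real_inner_self_eq_norm_sq, ← add_div,
    ← inner_add_left, add_sub_cancel]

end Gradient

theorem approximate_entropy_dissipation_decomposition
    {E : Type*} [NormedAddCommGroup E] [InnerProductSpace ℝ E] [CompleteSpace E]
    (x : E) (δ : ℝ) (hδ : 0 < δ) (u g : E → ℝ)
    (hu : DifferentiableAt ℝ u x) (hg : DifferentiableAt ℝ g x) (hux : 0 ≤ u x) :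
    (inner ℝ (gradient (fun y => Real.exp (-g y) * u y) x)
          (gradient (fun y => Real.exp (-g y) * (δ + u y)) x) : ℝ)
        / (Real.exp (-g x) * (δ + u x))
      = 4 * ‖gradient (fun y => Real.sqrt (Real.exp (-g y) * (δ + u y))) x‖ ^ 2
        + (δ / (δ + u x)) *
            (inner ℝ (gradient g x)
              (gradient (fun y => Real.exp (-g y) * (δ + u y)) x) : ℝ) := by
  set w : E → ℝ := fun y => exp (-g y) * (δ + u y)
  have hwx : 0 < w x := by positivity
  have hw : HasGradientAt w (gradient w x) x :=
    ((hg.neg.exp).mul ((differentiableAt_const δ).add hu)).hasGradientAt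
  have hexp : HasGradientAt (fun y => δ * exp (-g y)) ((-(δ * exp (-g x))) • gradient g x) x := by
    simpa using ((hasDerivAt_neg (g x)).exp.const_mul δ).comp_hasGradientAt hg.hasGradientAt
  have hF : HasGradientAt (fun y => exp (-g y) * u y)
      (gradient w x + (δ * exp (-g x)) • gradient g x) x := by
    convert hw.sub hexp using 1
    · ext y; simp only [w]; ring
    · rw [neg_smul, sub_neg_eq_add]
  rw [hF.gradient, inner_div_eq_four_mul_norm_gradient_sqrt_sq_add _ hw hwx, add_sub_cancel_left,
    real_inner_smul_left]
  simp only [w]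
  field_simp
end
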